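/- For every integer n ≥ 1, every permutation σ ∈ S_n, every natural number m, and every real number d > 0, the following two sums over the symmetric group are equal: Σ_{g ∈ S_n} d^{l(g⁻¹σ) + m·l(g) + m·l(σ⁻¹g)} = Σ_{g ∈ S_n} d^{l(g) + m·l(g) + m·l(σ⁻¹g)}. (This is the identity underlying the vanishing of the annealed Rényi conditional entropy at the transition point N_A = m.) -/
import Mathlib


/-- Number of cycles of a permutation, counting fixed points as cycles of length 1. -/
def cycleCount {n : ℕ} (g : Equiv.Perm (Fin n)) : ℕ :=
  g.cycleType.card + (n - g.support.card)

lemma cycleCount_inv {n : ℕ} (g : Equiv.Perm (Fin n)) : cycleCount g⁻¹ = cycleCount g := by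
  simp [cycleCount]

lemma cycleCount_conj {n : ℕ} (τ g : Equiv.Perm (Fin n)) :
    cycleCount (τ * g * τ⁻¹) = cycleCount g := by
  unfold cycleCount
  rw [Equiv.Perm.cycleType_conj, Equiv.Perm.support_conj, Finset.card_map]

/-- For every `σ ∈ S_n`, `m ∈ ℕ` and real `d > 0`,
`Σ_{g ∈ S_n} d^{l(g⁻¹σ) + m·l(g) + m·l(σ⁻¹g)} = Σ_{g ∈ S_n} d^{l(g) + m·l(g) + m·l(σ⁻¹g)}`
(the identity underlying the vanishing of the annealed Rényi conditional entropy at the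
transition point `N_A = m`). -/
theorem sum_cycleCount_symm (n : ℕ) (hn : 1 ≤ n) (σ : Equiv.Perm (Fin n)) (m : ℕ)
    (d : ℝ) (hd : 0 < d) :
    ∑ g : Equiv.Perm (Fin n),
        d ^ (cycleCount (g⁻¹ * σ) + m * cycleCount g + m * cycleCount (σ⁻¹ * g))
      = ∑ g : Equiv.Perm (Fin n),
          d ^ (cycleCount g + m * cycleCount g + m * cycleCount (σ⁻¹ * g)) := by
  refine (Fintype.sum_equiv ((Equiv.inv (Equiv.Perm (Fin n))).trans (Equiv.mulLeft σ))
    _ _ fun h => ?_).symm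
  have e1 : ((σ * h⁻¹ : Equiv.Perm (Fin n)))⁻¹ * σ = h := by group
  have e2 : cycleCount (σ * h⁻¹) = cycleCount (σ⁻¹ * h) := by
    rw [← cycleCount_inv (σ * h⁻¹)]
    have : (σ * h⁻¹)⁻¹ = σ * (σ⁻¹ * h) * σ⁻¹ := by group
    rw [this, cycleCount_conj]
  have e3 : σ⁻¹ * (σ * h⁻¹) = h⁻¹ := by group
  simp only [Equiv.trans_apply, Equiv.inv_apply, Equiv.coe_mulLeft, e1, e2, e3,
    cycleCount_inv]
  ring
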